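/- In the natural deduction system NDi for intuitionistic propositional logic, every normal proof with no open assumptions ends with an introduction rule; consequently NDi is consistent (⊥ is not derivable without open assumptions) and has the disjunction property (a closed normal proof of φ ∨ ψ yields a closed proof of φ or of ψ). -/
import Mathlib


set_option autoImplicit true

inductive PropForm : Type
  | var : ℕ → PropForm
  | fls : PropForm
  | tru : PropForm
  | conj : PropForm → PropForm → PropForm
  | disj : PropForm → PropForm → PropForm
  | arr : PropForm → PropForm → PropForm
deriving DecidableEq

open PropForm

/-- The set of propositional atoms occurring in a formula. -/
def atoms : PropForm → Finset ℕ
  | var p => {p}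
  | fls => ∅
  | tru => ∅
  | conj φ ψ => atoms φ ∪ atoms ψ
  | disj φ ψ => atoms φ ∪ atoms ψ
  | arr φ ψ => atoms φ ∪ atoms ψ

/-- Natural deduction derivations for intuitionistic propositional logic (NDi), with a
list of open assumptions as context. -/
inductive NDi : List PropForm → PropForm → Type
  | assm : φ ∈ Γ → NDi Γ φ
  | conjI : NDi Γ φ → NDi Γ ψ → NDi Γ (conj φ ψ)
  | conjE₁ : NDi Γ (conj φ ψ) → NDi Γ φ
  | conjE₂ : NDi Γ (conj φ ψ) → NDi Γ ψ
  | disjI₁ : NDi Γ φ → NDi Γ (disj φ ψ)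
  | disjI₂ : NDi Γ ψ → NDi Γ (disj φ ψ)
  | disjE : NDi Γ (disj φ ψ) → NDi (φ :: Γ) χ → NDi (ψ :: Γ) χ → NDi Γ χ
  | arrI : NDi (φ :: Γ) ψ → NDi Γ (arr φ ψ)
  | arrE : NDi Γ (arr φ ψ) → NDi Γ φ → NDi Γ ψ
  | flsE : NDi Γ fls → NDi Γ φ

/-- A derivation ends with (is) an introduction rule. -/
def isIntro {Γ : List PropForm} {φ : PropForm} : NDi Γ φ → Bool
  | .conjI _ _ => true
  | .disjI₁ _ => true
  | .disjI₂ _ => true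
  | .arrI _ => true
  | _ => false

/-- A derivation is normal: no elimination rule has as its major premise the conclusion
of an introduction rule (no detours). -/
def normalP {Γ : List PropForm} {φ : PropForm} : NDi Γ φ → Prop
  | .assm _ => True
  | .conjI d e => normalP d ∧ normalP e
  | .conjE₁ d => normalP d ∧ isIntro d = false
  | .conjE₂ d => normalP d ∧ isIntro d = false
  | .disjI₁ d => normalP d
  | .disjI₂ d => normalP d
  | .disjE d e f => normalP d ∧ normalP e ∧ normalP f ∧ isIntro d = false
  | .arrI d => normalP d
  | .arrE d e => normalP d ∧ normalP e ∧ isIntro d = false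
  | .flsE d => normalP d ∧ isIntro d = false


/-- Classical truth-value semantics. -/
def evalF (v : ℕ → Prop) : PropForm → Prop
  | .var p => v p
  | .fls => False
  | .tru => True
  | .conj φ ψ => evalF v φ ∧ evalF v ψ
  | .disj φ ψ => evalF v φ ∨ evalF v ψ
  | .arr φ ψ => evalF v φ → evalF v ψ

theorem NDi.sound : ∀ {Γ φ}, NDi Γ φ → ∀ v : ℕ → Prop,
    (∀ χ ∈ Γ, evalF v χ) → evalF v φ
  | _, _, .assm h, _, hv => hv _ h
  | _, _, .conjI d e, v, hv => ⟨d.sound v hv, e.sound v hv⟩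
  | _, _, .conjE₁ d, v, hv => (d.sound v hv).1
  | _, _, .conjE₂ d, v, hv => (d.sound v hv).2
  | _, _, .disjI₁ d, v, hv => Or.inl (d.sound v hv)
  | _, _, .disjI₂ d, v, hv => Or.inr (d.sound v hv)
  | _, _, .disjE d e f, v, hv => (d.sound v hv).elim
      (fun h => e.sound v (fun χ hχ => by
        rcases List.mem_cons.mp hχ with rfl | hχ
        · exact h
        · exact hv _ hχ))
      (fun h => f.sound v (fun χ hχ => by
        rcases List.mem_cons.mp hχ with rfl | hχ
        · exact h
        · exact hv _ hχ))
  | _, _, .arrI d, v, hv => fun h => d.sound v (fun χ hχ => by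
        rcases List.mem_cons.mp hχ with rfl | hχ
        · exact h
        · exact hv _ hχ)
  | _, _, .arrE d e, v, hv => d.sound v hv (e.sound v hv)
  | _, _, .flsE d, v, hv => (d.sound v hv).elim

theorem closed_normal_intro : ∀ {Γ φ} (d : NDi Γ φ), Γ = [] → normalP d →
    isIntro d = true
  | _, _, .assm h, hΓ, _ => by subst hΓ; simp at h
  | _, _, .conjI _ _, _, _ => rfl
  | _, _, .disjI₁ _, _, _ => rfl
  | _, _, .disjI₂ _, _, _ => rfl
  | _, _, .arrI _, _, _ => rfl
  | _, _, .conjE₁ d, hΓ, hn => by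
      have := closed_normal_intro d hΓ hn.1; rw [hn.2] at this; cases this
  | _, _, .conjE₂ d, hΓ, hn => by
      have := closed_normal_intro d hΓ hn.1; rw [hn.2] at this; cases this
  | _, _, .disjE d _ _, hΓ, hn => by
      have := closed_normal_intro d hΓ hn.1; rw [hn.2.2.2] at this; cases this
  | _, _, .arrE d _, hΓ, hn => by
      have := closed_normal_intro d hΓ hn.1; rw [hn.2.2] at this; cases this
  | _, _, .flsE d, hΓ, hn => by
      have := closed_normal_intro d hΓ hn.1; rw [hn.2] at this; cases this

/-- Every normal NDi-proof without open assumptions ends with an introduction rule;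
consequently NDi is consistent (`⊥` has no closed proof) and has the disjunction
property (a closed normal proof of `φ ∨ ψ` yields a closed proof of `φ` or of `ψ`). -/
theorem NDi_normal_ends_with_intro_consistent_dp :
    (∀ (φ : PropForm) (d : NDi [] φ), normalP d → isIntro d = true) ∧
    (¬ Nonempty (NDi [] fls)) ∧
    (∀ (φ ψ : PropForm) (d : NDi [] (disj φ ψ)), normalP d →
      (Nonempty (NDi [] φ) ∨ Nonempty (NDi [] ψ))) := by
  refine ⟨fun φ d hn => closed_normal_intro d rfl hn, ?_, ?_⟩
  · rintro ⟨d⟩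
    exact d.sound (fun _ => True) (fun χ hχ => by simp at hχ)
  · intro φ ψ d hn
    have hi := closed_normal_intro d rfl hn
    cases d with
    | assm h => simp at h
    | disjI₁ d => exact Or.inl ⟨d⟩
    | disjI₂ d => exact Or.inr ⟨d⟩
    | conjE₁ d => simp [isIntro] at hi
    | conjE₂ d => simp [isIntro] at hi
    | disjE d e f => simp [isIntro] at hi
    | arrE d e => simp [isIntro] at hi
    | flsE d => simp [isIntro] at hi
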